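/- arXiv:1103.4875 — 4 statements merged into one kernel-verified Lean document; each statement's English description precedes it below -/
import Mathlib

section
/- A joint degree matrix J is realizable as a simple graph if and only if: (1) for every k, the quantity D_k := (1/k)(J_{k,k} + Σ_l J_{k,l}) is a nonnegative integer; (2) for all k ≠ l, J_{k,l} ≤ D_k·D_l; and (3) for all k, J_{k,k} ≤ C(D_k, 2). -/
/-!
Necessity is double counting. If `V_k` is the set of vertices of degree `k`, the ordered adjacent
pairs `(v, w)` with `deg v = k` number `k |V_k| = 2 J_kk + ∑_{l ≠ k} J_kl`, so `D_k = |V_k|`;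
the `(k, l)`-edges inject into `V_k × V_l` for `k ≠ l` and into the pairs of `V_k` for `k = l`.

For sufficiency, class `k` gets `D_k` vertices and the stubs `0, …, k D_k - 1`, stub `t` belonging
to vertex `t % D_k`, so every vertex owns exactly `k` stubs. The stubs are cut into consecutive
blocks, one for each class `l`, of length `J_kl` (`2 J_kk` for `l = k`); within a block the
vertices of class `k` own equally many stubs up to one. Block `k` of class `k` is realised by a
near-regular graph on the class, which exists by a Havel–Hakimi induction. For `k < l`, the
vertices of class `k` own `c_0, c_1, …` stubs of their block `l`, with `c_i ≤ D_l` since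
`J_kl ≤ D_k D_l`; vertex `i` is joined to the owners of the next `c_i` stubs of block `k` of
class `l`. These are `c_i ≤ D_l` consecutive stubs, so distinct vertices, and every vertex of
class `l` is joined to as many vertices of class `k` as it has stubs in that block.
-/

/-- The degree of a vertex (cardinality of its neighbor set). -/
noncomputable def gdeg {V : Type*} (G : SimpleGraph V) (v : V) : ℕ :=
  (G.neighborSet v).ncard

/-- The joint degree matrix entry `jdm G k l`: the number of edges of `G`
whose endpoints have degrees `k` and `l` (each edge counted once). -/
noncomputable def jdm {V : Type*} (G : SimpleGraph V) (k l : ℕ) : ℕ :=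
  {e ∈ G.edgeSet | Sym2.map (gdeg G) e = s(k, l)}.ncard

/-- The implied number of degree-`k` vertices derived from a joint degree matrix `J`
(with support contained in degrees `< N`): `D_k = (J_{k,k} + Σ_l J_{k,l}) / k`. -/
def Dof (N : ℕ) (J : ℕ → ℕ → ℕ) (k : ℕ) : ℕ :=
  (J k k + ∑ l ∈ Finset.range N, J k l) / k

open Finset

def modCount (D i a b : ℕ) : ℕ := #{t ∈ Ico a b | t % D = i}

lemma modCount_add {D i a b c : ℕ} (hab : a ≤ b) (hbc : b ≤ c) :
    modCount D i a b + modCount D i b c = modCount D i a c := by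
  rw [modCount, modCount, modCount, ← card_union_of_disjoint
    (disjoint_filter_filter (Ico_disjoint_Ico_consecutive a b c)), ← filter_union,
    Ico_union_Ico_eq_Ico hab hbc]

lemma sum_modCount_telescope {D i : ℕ} {A : ℕ → ℕ} (hA : Monotone A) (n : ℕ) :
    ∑ l ∈ range n, modCount D i (A l) (A (l + 1)) = modCount D i (A 0) (A n) := by
  induction n with
  | zero => simp [modCount]
  | succ n ih => rw [sum_range_succ, ih, modCount_add (hA (Nat.zero_le n)) (hA n.le_succ)]

lemma sum_modCount {D : ℕ} (hD : 0 < D) (a b : ℕ) :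
    ∑ i ∈ range D, modCount D i a b = b - a := by
  rw [← Nat.card_Ico, card_eq_sum_card_fiberwise (f := (· % D)) (t := range D)]
  · rfl
  · exact fun t _ => mem_coe.2 (mem_range.2 (Nat.mod_lt t hD))

lemma modCount_add_mul {D i : ℕ} (hi : i < D) (a c : ℕ) :
    modCount D i a (a + c * D) = c := by
  induction c with
  | zero => simp [modCount]
  | succ c ih =>
    have hperiod : modCount D i (a + c * D) (a + c * D + D) = 1 := by
      rw [modCount, Nat.filter_Ico_card_eq_of_periodic _ _ _ (fun t => by simp),
        Nat.count_eq_card_filter_range, card_eq_one]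
      refine ⟨i, ext fun t => ?_⟩
      simp only [mem_filter, mem_range, mem_singleton]
      constructor
      · rintro ⟨ht, rfl⟩
        exact (Nat.mod_eq_of_lt ht).symm
      · rintro rfl
        exact ⟨hi, Nat.mod_eq_of_lt hi⟩
    rw [add_one_mul, ← add_assoc, ← modCount_add (Nat.le_add_right a _) (Nat.le_add_right _ D),
      ih, hperiod]

lemma modCount_mono_right {D i a b b' : ℕ} (h : b ≤ b') :
    modCount D i a b ≤ modCount D i a b' :=
  card_le_card (filter_subset_filter _ (Ico_subset_Ico le_rfl h))

lemma modCount_le {D i a b c : ℕ} (hi : i < D) (h : b ≤ a + c * D) : modCount D i a b ≤ c :=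
  (modCount_mono_right h).trans (modCount_add_mul hi a c).le

lemma le_modCount {D i a b c : ℕ} (hi : i < D) (h : a + c * D ≤ b) : c ≤ modCount D i a b :=
  (modCount_add_mul hi a c).ge.trans (modCount_mono_right h)

lemma modCount_le_add_one {D i j a b : ℕ} (hi : i < D) (hj : j < D) :
    modCount D i a b ≤ modCount D j a b + 1 := by
  rcases lt_or_ge b a with hba | hab
  · simp [modCount, Ico_eq_empty_of_le hba.le]
  have hD : 0 < D := by omega
  have h1 := le_modCount (a := a) (b := b) (c := (b - a) / D) hj (by
    have := Nat.div_mul_le_self (b - a) D; omega)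
  have h2 := modCount_le (a := a) (b := b) (c := (b - a) / D + 1) hi (by
    have := Nat.lt_div_mul_add (a := b - a) hD; rw [add_one_mul]; omega)
  omega

lemma card_filter_pos_eq_sum {α : Type*} [Fintype α] (f : α → ℕ) (hf : ∀ a, f a ≤ 1) :
    #{a | 0 < f a} = ∑ a, f a := by
  rw [card_filter]
  refine sum_congr rfl fun a _ => ?_
  have := hf a
  split_ifs <;> omega

lemma card_filter_sigma {ι : Type*} [Fintype ι] {α : ι → Type*} [∀ i, Fintype (α i)]
    (p : (Σ i, α i) → Prop) [DecidablePred p] :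
    #{x | p x} = ∑ i, #{a : α i | p ⟨i, a⟩} := by
  simp only [card_filter, Fintype.sum_sigma]

lemma exists_card_eq_forall_le {α : Type*} [Fintype α] (f : α → ℕ) {m : ℕ}
    (hm : m ≤ Fintype.card α) : ∃ S : Finset α, #S = m ∧ ∀ a ∈ S, ∀ b ∉ S, f b ≤ f a := by
  classical
  induction m with
  | zero => exact ⟨∅, rfl, by simp⟩
  | succ m ih =>
    obtain ⟨S, hS, hup⟩ := ih (by omega)
    have hne : Sᶜ.Nonempty := by rw [← card_pos, card_compl]; omega
    obtain ⟨a, ha, hmax⟩ := exists_max_image Sᶜ f hne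
    have haS : a ∉ S := mem_compl.1 ha
    refine ⟨insert a S, by rw [card_insert_of_notMem haS, hS], fun b hb c hc => ?_⟩
    rw [mem_insert, not_or] at hc
    rcases mem_insert.1 hb with rfl | hb
    · exact hmax c (mem_compl.2 hc.2)
    · exact hup b hb c hc.2

namespace SimpleGraph

variable {V W : Type*} (G : SimpleGraph V)

lemma jdm_comm (k l : ℕ) : jdm G k l = jdm G l k := by
  simp only [jdm, Sym2.eq_swap (a := k)]

lemma gdeg_eq_card_filter [Fintype V] [DecidableRel G.Adj] (v : V) :
    gdeg G v = #{w | G.Adj v w} := by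
  rw [gdeg, ← Set.ncard_coe_finset]
  congr 1
  ext w
  simp

lemma gdeg_eq_sum [Fintype V] [DecidableRel G.Adj] (v : V) :
    gdeg G v = ∑ w, if G.Adj v w then 1 else 0 := by
  rw [gdeg_eq_card_filter, card_filter]

variable {G} {G' : SimpleGraph W}

lemma Iso.gdeg_apply (f : G ≃g G') (v : V) : gdeg G' (f v) = gdeg G v := by
  rw [gdeg, gdeg, ← f.image_neighborSet, Set.ncard_image_of_injective _ f.injective]

lemma Iso.jdm_eq (f : G ≃g G') (k l : ℕ) : jdm G' k l = jdm G k l := by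
  rw [jdm, jdm, ← Set.ncard_image_of_injective _ (Sym2.map.injective f.injective)]
  congr 1
  ext e
  induction e using Sym2.inductionOn with
  | _ x y =>
    obtain ⟨x, rfl⟩ := f.surjective x
    obtain ⟨y, rfl⟩ := f.surjective y
    constructor
    · rintro ⟨hxy, hdeg⟩
      refine ⟨s(x, y), ⟨f.map_adj_iff.1 hxy, ?_⟩, rfl⟩
      simpa [f.gdeg_apply] using hdeg
    · rintro ⟨e, ⟨he, hdeg⟩, hfe⟩
      induction e using Sym2.inductionOn with
      | _ a b =>
        rw [← hfe]
        refine ⟨f.map_adj_iff.2 he, ?_⟩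
        simpa [f.gdeg_apply] using hdeg

variable (G) [Fintype V] [DecidableRel G.Adj]

noncomputable def degPairs (k l : ℕ) : Finset (V × V) :=
  {p | G.Adj p.1 p.2 ∧ gdeg G p.1 = k ∧ gdeg G p.2 = l}

lemma two_mul_jdm (k l : ℕ) :
    2 * jdm G k l = #{p : V × V | G.Adj p.1 p.2 ∧ s(gdeg G p.1, gdeg G p.2) = s(k, l)} := by
  classical
  set H := fromEdgeSet {e ∈ G.edgeSet | Sym2.map (gdeg G) e = s(k, l)}
  have hH : H.edgeSet = {e ∈ G.edgeSet | Sym2.map (gdeg G) e = s(k, l)} := by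
    rw [edgeSet_fromEdgeSet, sdiff_eq_left]
    exact Set.disjoint_left.2 fun e he => G.not_isDiag_of_mem_edgeSet he.1
  have hpairs : ({p | G.Adj p.1 p.2 ∧ s(gdeg G p.1, gdeg G p.2) = s(k, l)} : Finset (V × V))
      = ({p | H.Adj p.1 p.2} : Finset (V × V)) := by
    ext ⟨x, y⟩
    simp only [H, mem_filter, mem_univ, true_and, fromEdgeSet_adj, Set.mem_ofPred_eq,
      mem_edgeSet, Sym2.map_mk]
    exact ⟨fun h => ⟨h, h.1.ne⟩, fun h => h.1⟩
  rw [jdm, ← hH, ← coe_edgeFinset, Set.ncard_coe_finset, hpairs]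
  convert H.two_mul_card_edgeFinset

lemma card_degPairs_comm (k l : ℕ) : #(G.degPairs k l) = #(G.degPairs l k) :=
  card_bij' (fun p _ => p.swap) (fun p _ => p.swap)
    (by simp +contextual [degPairs, G.adj_comm]) (by simp +contextual [degPairs, G.adj_comm])
    (by simp) (by simp)

lemma card_degPairs_of_ne {k l : ℕ} (h : k ≠ l) : #(G.degPairs k l) = jdm G k l := by
  classical
  have hunion : ({p | G.Adj p.1 p.2 ∧ s(gdeg G p.1, gdeg G p.2) = s(k, l)} : Finset (V × V))
      = G.degPairs k l ∪ G.degPairs l k := by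
    ext p
    simp only [degPairs, mem_union, mem_filter, mem_univ, true_and, Sym2.eq_iff]
    tauto
  have hdisj : Disjoint (G.degPairs k l) (G.degPairs l k) :=
    disjoint_filter.2 fun p _ hp hp' => h (hp.2.1.symm.trans hp'.2.1)
  have := G.two_mul_jdm k l
  rw [hunion, card_union_of_disjoint hdisj, card_degPairs_comm G l k] at this
  omega

lemma card_degPairs_self (k : ℕ) : #(G.degPairs k k) = 2 * jdm G k k := by
  rw [two_mul_jdm]
  congr 1
  ext p
  simp [degPairs]

lemma card_degPairs (k l : ℕ) :
    #(G.degPairs k l) = jdm G k l + if l = k then jdm G k l else 0 := by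
  split_ifs with h
  · rw [h, card_degPairs_self, two_mul]
  · rw [card_degPairs_of_ne G (Ne.symm h), add_zero]

lemma card_degPairs_eq_sum (k l : ℕ) :
    #(G.degPairs k l) = ∑ v with gdeg G v = k, #{w | G.Adj v w ∧ gdeg G w = l} := by
  rw [degPairs, card_filter, Fintype.sum_prod_type, sum_filter]
  refine sum_congr rfl fun v _ => ?_
  split_ifs with hv
  · rw [card_filter]
    simp only [hv, true_and]
  · simp [hv]

lemma mul_card_gdeg_eq (k N : ℕ) (hN : ∀ l, N ≤ l → jdm G k l = 0) :
    k * #{v | gdeg G v = k} = jdm G k k + ∑ l ∈ range N, jdm G k l := by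
  have hnbr : ∀ v w, gdeg G v = k → G.Adj v w → gdeg G w < N := fun v w hv hvw => by
    by_contra! hw
    have hpos : 0 < #(G.degPairs k (gdeg G w)) :=
      card_pos.2 ⟨(v, w), by simp [degPairs, hv, hvw]⟩
    rw [card_degPairs, hN _ hw] at hpos
    simp at hpos
  calc k * #{v | gdeg G v = k}
      = ∑ v with gdeg G v = k, gdeg G v := by
        rw [sum_congr rfl fun v hv => (mem_filter.1 hv).2, sum_const, smul_eq_mul, mul_comm]
    _ = ∑ v with gdeg G v = k, ∑ l ∈ range N, #{w | G.Adj v w ∧ gdeg G w = l} := by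
      refine sum_congr rfl fun v hv => ?_
      rw [gdeg_eq_card_filter, card_eq_sum_card_fiberwise (f := gdeg G) (t := range N)]
      · simp only [filter_filter]
      · exact fun w hw => mem_range.2 (hnbr v w (mem_filter.1 hv).2 (mem_filter.1 hw).2)
    _ = ∑ l ∈ range N, #(G.degPairs k l) := by
      rw [sum_comm]
      simp only [card_degPairs_eq_sum]
    _ = jdm G k k + ∑ l ∈ range N, jdm G k l := by
      rw [sum_congr rfl fun l _ => G.card_degPairs k l, sum_add_distrib, sum_ite_eq', add_comm]
      split_ifs with hk
      · rfl
      · rw [hN k (by simpa using hk)]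

lemma jdm_le_card_mul_card {k l : ℕ} (h : k ≠ l) :
    jdm G k l ≤ #{v | gdeg G v = k} * #{v | gdeg G v = l} := by
  rw [← card_degPairs_of_ne G h, ← card_product]
  refine card_le_card fun p hp => ?_
  simp only [degPairs, mem_filter, mem_univ, true_and] at hp
  simp [hp.2.1, hp.2.2]

lemma jdm_le_choose_two (k : ℕ) : jdm G k k ≤ (#{v | gdeg G v = k}).choose 2 := by
  classical
  set n := #{v | gdeg G v = k}
  have h : 2 * jdm G k k ≤ n * n - n := by
    rw [← card_degPairs_self, ← offDiag_card]
    refine card_le_card fun p hp => ?_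
    simp only [degPairs, mem_filter, mem_univ, true_and] at hp
    simp [hp.2.1, hp.2.2, hp.1.ne]
  rw [Nat.choose_two_right, Nat.le_div_iff_mul_le two_pos, Nat.mul_sub_one]
  omega

def adjoinVertex {n : ℕ} (G : SimpleGraph (Fin n)) (S : Finset (Fin n)) :
    SimpleGraph (Fin (n + 1)) where
  Adj x y := Fin.cases (motive := fun _ => Prop)
    (Fin.cases (motive := fun _ => Prop) False (· ∈ S) y)
    (fun a => Fin.cases (motive := fun _ => Prop) (a ∈ S) (G.Adj a) y) x
  symm := ⟨fun x y => by
    cases x using Fin.cases <;> cases y using Fin.cases <;> simp [G.adj_comm]⟩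
  loopless := ⟨fun x => by cases x using Fin.cases <;> simp⟩

section AdjoinVertex

variable {n : ℕ} (G : SimpleGraph (Fin n)) (S : Finset (Fin n))

@[simp] lemma adjoinVertex_adj_zero_succ (a : Fin n) :
    (G.adjoinVertex S).Adj 0 a.succ ↔ a ∈ S := by simp [adjoinVertex]

@[simp] lemma adjoinVertex_adj_succ_zero (a : Fin n) :
    (G.adjoinVertex S).Adj a.succ 0 ↔ a ∈ S := by simp [adjoinVertex]

@[simp] lemma adjoinVertex_adj_succ_succ (a b : Fin n) :
    (G.adjoinVertex S).Adj a.succ b.succ ↔ G.Adj a b := by simp [adjoinVertex]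

lemma gdeg_adjoinVertex_zero : gdeg (G.adjoinVertex S) 0 = #S := by
  classical
  rw [gdeg_eq_sum, Fin.sum_univ_succ]
  simp

lemma gdeg_adjoinVertex_succ (a : Fin n) :
    gdeg (G.adjoinVertex S) a.succ = gdeg G a + if a ∈ S then 1 else 0 := by
  classical
  rw [gdeg_eq_sum, gdeg_eq_sum, Fin.sum_univ_succ, add_comm]
  simp

end AdjoinVertex

end SimpleGraph

section HavelHakimi

/- Joining vertex `0` to a set `S` of `d 0` vertices of largest degree keeps the residual degree
sequence balanced. It could fail only by `S` containing a vertex of degree `0`, or by the residual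
degree of a vertex outside `S` staying at `n`; both force `∑ d` to be odd. -/

variable {n : ℕ} {d : Fin (n + 1) → ℕ} {S : Finset (Fin n)}

lemma pos_of_mem_of_forall_le (hbal : ∀ i j, d i ≤ d j + 1) (heven : Even (∑ i, d i))
    (hS : #S = d 0) (hup : ∀ a ∈ S, ∀ b, b ∉ S → d (Fin.succ b) ≤ d (Fin.succ a))
    {a : Fin n} (ha : a ∈ S) : 0 < d a.succ := by
  by_contra! h0
  have hS1 : #S = 1 := by
    have := hbal 0 a.succ
    have := card_pos.2 ⟨a, ha⟩
    omega
  have hzero : ∀ b : Fin n, d b.succ = 0 := fun b => by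
    by_cases hb : b ∈ S
    · rw [card_le_one.1 hS1.le b hb a ha]; omega
    · have := hup a ha b hb; omega
  have hsum : ∑ i, d i = 1 := by
    rw [Fin.sum_univ_succ, sum_eq_zero fun b _ => hzero b, ← hS, hS1, add_zero]
  exact Nat.not_even_one (hsum ▸ heven)

lemma sub_ite_mem_lt (hbal : ∀ i j, d i ≤ d j + 1) (heven : Even (∑ i, d i))
    (hlt : ∀ i, d i < n + 1) (hS : #S = d 0)
    (hup : ∀ a ∈ S, ∀ b, b ∉ S → d (Fin.succ b) ≤ d (Fin.succ a)) (a : Fin n) :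
    d a.succ - (if a ∈ S then 1 else 0) < n := by
  by_contra! hge
  have hn := a.pos
  have hlt' := hlt a.succ
  have ha : a ∉ S := fun ha => by simp only [ha, if_true] at hge; omega
  have hda : d a.succ = n := by simp only [ha, if_false] at hge; omega
  have hdS : ∀ b ∈ S, d b.succ = n := fun b hb => by
    have := hup b hb a ha; have := hlt b.succ; omega
  have hS' : S = univ.erase a := by
    refine eq_of_subset_of_card_le
      (fun b hb => mem_erase.2 ⟨ne_of_mem_of_not_mem hb ha, mem_univ b⟩) ?_
    have := hbal a.succ 0
    rw [card_erase_of_mem (mem_univ a), card_univ, Fintype.card_fin]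
    omega
  have hall : ∀ b : Fin n, d b.succ = n := fun b => by
    by_cases hb : b = a
    · rw [hb, hda]
    · exact hdS b (hS' ▸ mem_erase.2 ⟨hb, mem_univ b⟩)
  have hd0 : d 0 = n - 1 := by
    rw [← hS, hS', card_erase_of_mem (mem_univ a), card_univ, Fintype.card_fin]
  have hsum : ∑ i, d i + 1 = n * (n + 1) := by
    rw [Fin.sum_univ_succ, sum_congr rfl fun b _ => hall b, sum_const, card_univ,
      Fintype.card_fin, smul_eq_mul, hd0, mul_add_one]
    omega
  obtain ⟨m, hm⟩ := heven
  obtain ⟨m', hm'⟩ := Nat.even_mul_succ_self n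
  omega

lemma sub_ite_mem_balanced (hbal : ∀ i j, d i ≤ d j + 1)
    (hup : ∀ a ∈ S, ∀ b, b ∉ S → d (Fin.succ b) ≤ d (Fin.succ a))
    (hpos : ∀ a ∈ S, 0 < d a.succ) (a b : Fin n) :
    d a.succ - (if a ∈ S then 1 else 0) ≤ d b.succ - (if b ∈ S then 1 else 0) + 1 := by
  have := hbal a.succ b.succ
  by_cases ha : a ∈ S <;> by_cases hb : b ∈ S <;> simp only [ha, hb, if_true, if_false]
  · have := hpos b hb; omega
  · omega
  · have := hpos b hb; have := hup b hb a ha; omega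
  · omega

end HavelHakimi

theorem exists_gdeg_eq_of_balanced {n : ℕ} (d : Fin n → ℕ) (hbal : ∀ i j, d i ≤ d j + 1)
    (heven : Even (∑ i, d i)) (hlt : ∀ i, d i < n) :
    ∃ G : SimpleGraph (Fin n), ∀ i, gdeg G i = d i := by
  induction n with
  | zero => exact ⟨⊥, fun i => i.elim0⟩
  | succ n ih =>
    obtain ⟨S, hS, hup⟩ := exists_card_eq_forall_le (fun a : Fin n => d a.succ)
      (m := d 0) (by simpa using Nat.lt_succ_iff.1 (hlt 0))
    have hpos : ∀ a ∈ S, 0 < d a.succ := fun a ha =>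
      pos_of_mem_of_forall_le hbal heven hS hup ha
    set r : Fin n → ℕ := fun a => d a.succ - if a ∈ S then 1 else 0
    have hr : ∀ a, r a + (if a ∈ S then 1 else 0) = d a.succ := fun a => by
      by_cases h : a ∈ S
      · have := hpos a h
        simp only [r, h, if_true]
        omega
      · simp only [r, h, if_false, Nat.sub_zero, add_zero]
    have hrsum : ∑ a, r a + #S = ∑ a : Fin n, d a.succ := by
      rw [← sum_congr rfl fun a _ => hr a, sum_add_distrib, sum_boole, filter_mem_eq_inter,
        univ_inter, Nat.cast_id]
    have hreven : Even (∑ a, r a) := by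
      rw [Fin.sum_univ_succ, ← hrsum, ← hS] at heven
      obtain ⟨m, hm⟩ := heven
      exact ⟨m - #S, by omega⟩
    obtain ⟨G, hG⟩ := ih r (sub_ite_mem_balanced hbal hup hpos) hreven
      (sub_ite_mem_lt hbal heven hlt hS hup)
    refine ⟨G.adjoinVertex S, fun i => ?_⟩
    cases i using Fin.cases with
    | zero => rw [SimpleGraph.gdeg_adjoinVertex_zero, hS]
    | succ a => rw [SimpleGraph.gdeg_adjoinVertex_succ, hG, hr]

theorem conditions_of_realization {V : Type*} [Fintype V] (G : SimpleGraph V) {N : ℕ}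
    {J : ℕ → ℕ → ℕ} (hsym : ∀ k l, J k l = J l k) (hsupp : ∀ k l, N ≤ k → J k l = 0)
    (hJ : ∀ k l, k ≤ l → jdm G k l = J k l) :
    (∀ k, 0 < k → k ∣ (J k k + ∑ l ∈ range N, J k l)) ∧
      (∀ k l, k ≠ l → J k l ≤ Dof N J k * Dof N J l) ∧
      (∀ k, J k k ≤ (Dof N J k).choose 2) := by
  classical
  have hJ' : ∀ k l, jdm G k l = J k l := fun k l => by
    rcases le_total k l with h | h
    · exact hJ k l h
    · rw [G.jdm_comm, hJ l k h, hsym]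
  have hcount : ∀ k, k * #{v | gdeg G v = k} = J k k + ∑ l ∈ range N, J k l := fun k => by
    simpa only [hJ'] using G.mul_card_gdeg_eq k N fun l hl => by rw [hJ', hsym, hsupp l k hl]
  have hD : ∀ k, 0 < k → Dof N J k = #{v | gdeg G v = k} := fun k hk => by
    rw [Dof, ← hcount, Nat.mul_div_cancel_left _ hk]
  have hzero : ∀ l, J 0 l = 0 := fun l => by
    rcases lt_or_ge l N with hl | hl
    · have h0 := hcount 0
      rw [zero_mul, eq_comm, add_eq_zero, sum_eq_zero_iff] at h0
      exact h0.2 l (mem_range.2 hl)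
    · rw [hsym, hsupp l 0 hl]
  refine ⟨fun k _ => ⟨_, (hcount k).symm⟩, fun k l hkl => ?_, fun k => ?_⟩
  · rcases Nat.eq_zero_or_pos k with rfl | hk
    · simp [hzero]
    rcases Nat.eq_zero_or_pos l with rfl | hl
    · simp [hsym k 0, hzero]
    rw [hD k hk, hD l hl, ← hJ']
    exact G.jdm_le_card_mul_card hkl
  · rcases Nat.eq_zero_or_pos k with rfl | hk
    · simp [hzero]
    rw [hD k hk, ← hJ']
    exact G.jdm_le_choose_two k

section ClassGraph

variable (N : ℕ) (J : ℕ → ℕ → ℕ)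


def blockLen (k l : ℕ) : ℕ := J k l + if l = k then J k k else 0

def blockStart (k l : ℕ) : ℕ := ∑ l' ∈ range l, blockLen J k l'

def stubCount (k l i : ℕ) : ℕ :=
  modCount (Dof N J k) i (blockStart J k l) (blockStart J k (l + 1))

def rowStart (k l i : ℕ) : ℕ := ∑ i' ∈ range i, stubCount N J k l i'

/-- For `k < l`: vertex `i` of class `k` is joined to vertex `j` of class `l` iff `j` owns one of
the stubs `rowStart N J k l i, …, rowStart N J k l (i + 1) - 1` of block `k` of class `l`. -/
def crossCount (k l i j : ℕ) : ℕ :=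
  modCount (Dof N J l) j (blockStart J l k + rowStart N J k l i)
    (blockStart J l k + rowStart N J k l (i + 1))

/-- The internal graphs `I k` live on `ℕ`, so that the adjacency of two vertices of equal class
needs no cast between `Fin (Dof N J k)` and `Fin (Dof N J l)`. -/
def classGraph (I : ℕ → SimpleGraph ℕ) : SimpleGraph (Σ k : Fin N, Fin (Dof N J k)) where
  Adj x y := (x.1 = y.1 ∧ (I x.1).Adj x.2 y.2) ∨
    (x.1 < y.1 ∧ 0 < crossCount N J x.1 y.1 x.2 y.2) ∨
    (y.1 < x.1 ∧ 0 < crossCount N J y.1 x.1 y.2 x.2)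
  symm := ⟨by
    rintro ⟨k, i⟩ ⟨l, j⟩ (⟨h, hI⟩ | h | h)
    · obtain rfl : k = l := h
      exact Or.inl ⟨rfl, hI.symm⟩
    · exact Or.inr (Or.inr h)
    · exact Or.inr (Or.inl h)⟩
  loopless := ⟨fun x h => by
    rcases h with ⟨-, hI⟩ | ⟨h, -⟩ | ⟨h, -⟩
    · exact (I x.1).loopless.irrefl _ hI
    · exact lt_irrefl _ h
    · exact lt_irrefl _ h⟩

variable {N J} {I : ℕ → SimpleGraph ℕ}

lemma blockStart_succ (k l : ℕ) :
    blockStart J k (l + 1) = blockStart J k l + blockLen J k l :=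
  sum_range_succ _ _

lemma blockStart_mono (k : ℕ) : Monotone (blockStart J k) :=
  monotone_nat_of_le_succ fun l => by rw [blockStart_succ]; omega

lemma blockStart_eq {k : ℕ} (hk : k < N) :
    blockStart J k N = J k k + ∑ l ∈ range N, J k l := by
  simp only [blockStart, blockLen]
  rw [sum_add_distrib, sum_ite_eq', if_pos (mem_range.2 hk), add_comm]

lemma blockLen_eq_zero_of_left (hsupp : ∀ k l, N ≤ k → J k l = 0) {k : ℕ} (hk : N ≤ k)
    (l : ℕ) : blockLen J k l = 0 := by
  simp [blockLen, hsupp k _ hk]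

lemma blockLen_eq_zero_of_right (hsym : ∀ k l, J k l = J l k)
    (hsupp : ∀ k l, N ≤ k → J k l = 0) (k : ℕ) {l : ℕ} (hl : N ≤ l) : blockLen J k l = 0 := by
  rw [blockLen, hsym, hsupp l k hl]
  split_ifs with h
  · rw [← h, hsupp l l hl]
  · rfl

lemma rowStart_succ (k l i : ℕ) :
    rowStart N J k l (i + 1) = rowStart N J k l i + stubCount N J k l i :=
  sum_range_succ _ _

lemma rowStart_mono (k l : ℕ) : Monotone (rowStart N J k l) :=
  monotone_nat_of_le_succ fun i => by rw [rowStart_succ]; omega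

lemma pos_of_lt_Dof {k i : ℕ} (hi : i < Dof N J k) : 0 < k :=
  Nat.pos_of_ne_zero fun h => by simp [h, Dof] at hi

lemma eq_zero_of_Dof_eq_zero (hle : ∀ k l, k ≠ l → J k l ≤ Dof N J k * Dof N J l)
    (hchoose : ∀ k, J k k ≤ (Dof N J k).choose 2) {k : ℕ} (hk : Dof N J k = 0) (l : ℕ) :
    J k l = 0 := by
  rcases eq_or_ne k l with rfl | hkl
  · simpa [hk] using hchoose k
  · simpa [hk] using hle k l hkl

lemma rowStart_Dof (hle : ∀ k l, k ≠ l → J k l ≤ Dof N J k * Dof N J l)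
    (hchoose : ∀ k, J k k ≤ (Dof N J k).choose 2) (k l : ℕ) :
    rowStart N J k l (Dof N J k) = blockLen J k l := by
  rcases Nat.eq_zero_or_pos (Dof N J k) with hk | hk
  · simp [rowStart, hk, blockLen, eq_zero_of_Dof_eq_zero hle hchoose hk]
  simp only [rowStart, stubCount]
  rw [sum_modCount hk, blockStart_succ]
  omega

lemma stubCount_le (hle : ∀ k l, k ≠ l → J k l ≤ Dof N J k * Dof N J l) {k l i : ℕ}
    (hkl : k ≠ l) (hi : i < Dof N J k) : stubCount N J k l i ≤ Dof N J l := by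
  refine modCount_le hi ?_
  rw [blockStart_succ, blockLen, if_neg (Ne.symm hkl), add_zero, mul_comm]
  exact Nat.add_le_add_left (hle k l hkl) _

lemma stubCount_self_lt (hchoose : ∀ k, J k k ≤ (Dof N J k).choose 2) {k i : ℕ}
    (hi : i < Dof N J k) : stubCount N J k k i < Dof N J k := by
  have h2 : 2 * J k k ≤ (Dof N J k - 1) * Dof N J k := by
    have := hchoose k
    rw [Nat.choose_two_right, mul_comm (_ - 1)] at *
    have := Nat.div_mul_le_self (Dof N J k * (Dof N J k - 1)) 2
    omega
  have := modCount_le (a := blockStart J k k) (b := blockStart J k (k + 1))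
    (c := Dof N J k - 1) hi (by rw [blockStart_succ, blockLen, if_pos rfl]; omega)
  rw [stubCount]
  omega

lemma crossCount_le_one (hle : ∀ k l, k ≠ l → J k l ≤ Dof N J k * Dof N J l) {k l i j : ℕ}
    (hkl : k ≠ l) (hi : i < Dof N J k) (hj : j < Dof N J l) : crossCount N J k l i j ≤ 1 := by
  refine modCount_le hj ?_
  rw [rowStart_succ, one_mul]
  have := stubCount_le hle hkl hi
  omega

lemma exists_gdeg_eq_stubCount (hle : ∀ k l, k ≠ l → J k l ≤ Dof N J k * Dof N J l)
    (hchoose : ∀ k, J k k ≤ (Dof N J k).choose 2) (k : ℕ) :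
    ∃ G : SimpleGraph (Fin (Dof N J k)), ∀ i, gdeg G i = stubCount N J k k i := by
  refine exists_gdeg_eq_of_balanced _ (fun i j => modCount_le_add_one i.2 j.2) ⟨J k k, ?_⟩
    fun i => stubCount_self_lt hchoose i.2
  rw [Fin.sum_univ_eq_sum_range (fun i => stubCount N J k k i), ← rowStart,
    rowStart_Dof hle hchoose, blockLen, if_pos rfl]

lemma classGraph_adj_self {k : Fin N} (i j : Fin (Dof N J k)) :
    (classGraph N J I).Adj ⟨k, i⟩ ⟨k, j⟩ ↔ (I k).Adj i j := by
  simp [classGraph]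

lemma classGraph_adj_of_lt {k l : Fin N} (h : k < l) (i : Fin (Dof N J k))
    (j : Fin (Dof N J l)) :
    (classGraph N J I).Adj ⟨k, i⟩ ⟨l, j⟩ ↔ 0 < crossCount N J k l i j := by
  simp [classGraph, h, h.ne, not_lt_of_gt h]

lemma classGraph_adj_of_gt {k l : Fin N} (h : l < k) (i : Fin (Dof N J k))
    (j : Fin (Dof N J l)) :
    (classGraph N J I).Adj ⟨k, i⟩ ⟨l, j⟩ ↔ 0 < crossCount N J l k j i := by
  simp [classGraph, h, h.ne', not_lt_of_gt h]

open Classical in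
lemma card_classGraph_adj (hsym : ∀ k l, J k l = J l k)
    (hle : ∀ k l, k ≠ l → J k l ≤ Dof N J k * Dof N J l)
    (hchoose : ∀ k, J k k ≤ (Dof N J k).choose 2)
    (hI : ∀ (k : Fin N) (i : Fin (Dof N J k)),
      #{j : Fin (Dof N J k) | (I k).Adj i j} = stubCount N J k k i)
    (k l : Fin N) (i : Fin (Dof N J k)) :
    #{j : Fin (Dof N J l) | (classGraph N J I).Adj ⟨k, i⟩ ⟨l, j⟩} = stubCount N J k l i := by
  rcases lt_trichotomy k l with h | rfl | h
  · have hkl : (k : ℕ) ≠ l := Fin.val_ne_of_ne h.ne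
    simp_rw [classGraph_adj_of_lt h]
    rw [card_filter_pos_eq_sum _ fun j => crossCount_le_one hle hkl i.2 j.2,
      Fin.sum_univ_eq_sum_range (fun j => crossCount N J k l i j)]
    rcases Nat.eq_zero_or_pos (Dof N J l) with hl | hl
    · have := stubCount_le hle hkl i.2
      simp only [hl, range_zero, sum_empty]
      omega
    simp only [crossCount]
    rw [sum_modCount hl, rowStart_succ]
    omega
  · simp_rw [classGraph_adj_self]
    exact hI k i
  · have hlk : (l : ℕ) ≠ k := Fin.val_ne_of_ne h.ne
    simp_rw [classGraph_adj_of_gt h]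
    rw [card_filter_pos_eq_sum _ fun j => crossCount_le_one hle hlk j.2 i.2,
      Fin.sum_univ_eq_sum_range (fun j => crossCount N J l k j i)]
    simp only [crossCount]
    rw [sum_modCount_telescope (A := fun j => blockStart J k l + rowStart N J l k j)
      fun a b hab => Nat.add_le_add_left (rowStart_mono l k hab) _]
    simp only [rowStart, range_zero, sum_empty, add_zero]
    rw [← rowStart, rowStart_Dof hle hchoose, stubCount, blockStart_succ, blockLen, blockLen,
      if_neg hlk.symm, if_neg hlk, hsym]

open Classical in
lemma gdeg_classGraph (hsym : ∀ k l, J k l = J l k)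
    (hdvd : ∀ k, 0 < k → k ∣ (J k k + ∑ l ∈ range N, J k l))
    (hle : ∀ k l, k ≠ l → J k l ≤ Dof N J k * Dof N J l)
    (hchoose : ∀ k, J k k ≤ (Dof N J k).choose 2)
    (hI : ∀ (k : Fin N) (i : Fin (Dof N J k)),
      #{j : Fin (Dof N J k) | (I k).Adj i j} = stubCount N J k k i)
    (x : Σ k : Fin N, Fin (Dof N J k)) : gdeg (classGraph N J I) x = x.1 := by
  obtain ⟨k, i⟩ := x
  rw [SimpleGraph.gdeg_eq_card_filter, card_filter_sigma]
  simp only [card_classGraph_adj hsym hle hchoose hI]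
  rw [Fin.sum_univ_eq_sum_range (fun l => stubCount N J k l i)]
  simp only [stubCount]
  rw [sum_modCount_telescope (blockStart_mono k), blockStart_eq k.2,
    ← Nat.mul_div_cancel' (hdvd k (pos_of_lt_Dof i.2)), ← Dof]
  simpa [blockStart] using modCount_add_mul i.2 0 k

open Classical in
lemma card_classGraph_adj_class (hsym : ∀ k l, J k l = J l k)
    (hsupp : ∀ k l, N ≤ k → J k l = 0)
    (hle : ∀ k l, k ≠ l → J k l ≤ Dof N J k * Dof N J l)
    (hchoose : ∀ k, J k k ≤ (Dof N J k).choose 2)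
    (hI : ∀ (k : Fin N) (i : Fin (Dof N J k)),
      #{j : Fin (Dof N J k) | (I k).Adj i j} = stubCount N J k k i)
    (x : Σ k : Fin N, Fin (Dof N J k)) (l : ℕ) :
    #{y | (classGraph N J I).Adj x y ∧ (y.1 : ℕ) = l} = stubCount N J x.1 l x.2 := by
  rw [card_filter_sigma]
  have hterm : ∀ l' : Fin N, #{j | (classGraph N J I).Adj x ⟨l', j⟩ ∧ (l' : ℕ) = l}
      = if (l' : ℕ) = l then stubCount N J x.1 l' x.2 else 0 := fun l' => by
    split_ifs with h
    · subst h
      simp only [and_true]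
      exact card_classGraph_adj hsym hle hchoose hI x.1 l' x.2
    · simp [h]
  simp only [hterm]
  rw [Fin.sum_univ_eq_sum_range (fun l' => if l' = l then stubCount N J x.1 l' x.2 else 0),
    sum_ite_eq']
  split_ifs with hl
  · rfl
  · rw [stubCount, blockStart_succ,
      blockLen_eq_zero_of_right hsym hsupp _ (not_lt.1 (mem_range.not.1 hl)), add_zero]
    simp [modCount]

open Classical in
lemma card_degPairs_classGraph (hsym : ∀ k l, J k l = J l k)
    (hsupp : ∀ k l, N ≤ k → J k l = 0)
    (hdvd : ∀ k, 0 < k → k ∣ (J k k + ∑ l ∈ range N, J k l))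
    (hle : ∀ k l, k ≠ l → J k l ≤ Dof N J k * Dof N J l)
    (hchoose : ∀ k, J k k ≤ (Dof N J k).choose 2)
    (hI : ∀ (k : Fin N) (i : Fin (Dof N J k)),
      #{j : Fin (Dof N J k) | (I k).Adj i j} = stubCount N J k k i) (k l : ℕ) :
    #((classGraph N J I).degPairs k l) = blockLen J k l := by
  rw [SimpleGraph.card_degPairs_eq_sum]
  simp only [gdeg_classGraph hsym hdvd hle hchoose hI,
    card_classGraph_adj_class hsym hsupp hle hchoose hI]
  rw [sum_filter, Fintype.sum_sigma]
  have hterm : ∀ k' : Fin N, ∑ i : Fin (Dof N J k'),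
      (if (k' : ℕ) = k then stubCount N J k' l i else 0)
      = if (k' : ℕ) = k then blockLen J k' l else 0 := fun k' => by
    split_ifs
    · rw [Fin.sum_univ_eq_sum_range (fun i => stubCount N J k' l i), ← rowStart,
        rowStart_Dof hle hchoose]
    · simp
  simp only [hterm]
  rw [Fin.sum_univ_eq_sum_range (fun k' => if k' = k then blockLen J k' l else 0), sum_ite_eq']
  split_ifs with hk
  · rfl
  · rw [blockLen_eq_zero_of_left hsupp (not_lt.1 (mem_range.not.1 hk))]

open Classical in
lemma jdm_classGraph (hsym : ∀ k l, J k l = J l k)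
    (hsupp : ∀ k l, N ≤ k → J k l = 0)
    (hdvd : ∀ k, 0 < k → k ∣ (J k k + ∑ l ∈ range N, J k l))
    (hle : ∀ k l, k ≠ l → J k l ≤ Dof N J k * Dof N J l)
    (hchoose : ∀ k, J k k ≤ (Dof N J k).choose 2)
    (hI : ∀ (k : Fin N) (i : Fin (Dof N J k)),
      #{j : Fin (Dof N J k) | (I k).Adj i j} = stubCount N J k k i) (k l : ℕ) :
    jdm (classGraph N J I) k l = J k l := by
  have := card_degPairs_classGraph hsym hsupp hdvd hle hchoose hI k l
  rw [SimpleGraph.card_degPairs, blockLen] at this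
  split_ifs at this with h
  · subst h
    omega
  · omega

end ClassGraph

theorem exists_realization {N : ℕ} {J : ℕ → ℕ → ℕ} (hsym : ∀ k l, J k l = J l k)
    (hsupp : ∀ k l, N ≤ k → J k l = 0)
    (hdvd : ∀ k, 0 < k → k ∣ (J k k + ∑ l ∈ range N, J k l))
    (hle : ∀ k l, k ≠ l → J k l ≤ Dof N J k * Dof N J l)
    (hchoose : ∀ k, J k k ≤ (Dof N J k).choose 2) :
    ∃ (n : ℕ) (G : SimpleGraph (Fin n)), ∀ k l, jdm G k l = J k l := by
  choose G hG using exists_gdeg_eq_stubCount hle hchoose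
  set H := classGraph N J fun k => (G k).map Fin.valEmbedding
  refine ⟨_, H.overFin rfl, fun k l => ((H.overFinIso rfl).jdm_eq k l).trans ?_⟩
  refine jdm_classGraph hsym hsupp hdvd hle hchoose (fun k i => ?_) k l
  classical
  rw [← hG, SimpleGraph.gdeg_eq_card_filter]
  congr 1
  ext j
  simp only [mem_filter, mem_univ, true_and]
  exact SimpleGraph.map_adj_apply (f := Fin.valEmbedding)

theorem stmt4_general (N : ℕ) (J : ℕ → ℕ → ℕ)
    (hsym : ∀ k l, J k l = J l k)
    (hsupp : ∀ k l, N ≤ k → J k l = 0) :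
    (∃ (n : ℕ) (G : SimpleGraph (Fin n)), ∀ k l, k ≤ l → jdm G k l = J k l) ↔
      ((∀ k, 0 < k → k ∣ (J k k + ∑ l ∈ Finset.range N, J k l)) ∧
       (∀ k l, k ≠ l → J k l ≤ Dof N J k * Dof N J l) ∧
       (∀ k, J k k ≤ (Dof N J k).choose 2)) := by
  refine ⟨fun ⟨_, G, hG⟩ => conditions_of_realization G hsym hsupp hG,
    fun ⟨hdvd, hle, hchoose⟩ => ?_⟩
  obtain ⟨n, G, hG⟩ := exists_realization hsym hsupp hdvd hle hchoose
  exact ⟨n, G, fun k l _ => hG k l⟩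

/-- A (symmetric, finitely supported, positive-degree indexed) joint degree matrix `J`
is realizable as a simple graph iff (1) `k` divides `J_{k,k} + Σ_l J_{k,l}` for every
`k > 0` (so `D_k` is a nonnegative integer), (2) `J_{k,l} ≤ D_k·D_l` for `k ≠ l`, and
(3) `J_{k,k} ≤ C(D_k, 2)` for every `k`. -/
theorem stmt4 (N : ℕ) (J : ℕ → ℕ → ℕ)
    (hsym : ∀ k l, J k l = J l k)
    (hzero : ∀ l, J 0 l = 0)
    (hsupp : ∀ k l, N ≤ k → J k l = 0) :
    (∃ (n : ℕ) (G : SimpleGraph (Fin n)), ∀ k l, k ≤ l → jdm G k l = J k l) ↔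
      ((∀ k, 0 < k → k ∣ (J k k + ∑ l ∈ Finset.range N, J k l)) ∧
       (∀ k l, k ≠ l → J k l ≤ Dof N J k * Dof N J l) ∧
       (∀ k, J k k ≤ (Dof N J k).choose 2)) :=
  stmt4_general N J hsym hsupp
end

section
/- The state space of the pseudograph Markov chain A is connected: any two pseudographs with the same joint degree matrix J (arising from perfect matchings in the JDM configuration model) can be transformed into one another by a finite sequence of endpoint swaps, each swap exchanging the vertex-assignments of two endpoints within a single degree neighborhood. -/
/-! Transpositions generate each symmetric group, so a single neighborhood can be moved to any
target matching by swaps; the finitely many neighborhoods are then changed one at a time. -/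

open Function

namespace Equiv.Perm

variable {ι : Type*} {α : ι → Type*} [DecidableEq ι] [∀ i, DecidableEq (α i)]

def SwapStep (a b : ∀ i, Perm (α i)) : Prop :=
  ∃ (i : ι) (t : Perm (α i)), t.IsSwap ∧ b = update a i (t * a i)

variable [∀ i, Finite (α i)]

theorem reflTransGen_swapStep_update_mul (a : ∀ i, Perm (α i)) (i : ι) (p : Perm (α i)) :
    Relation.ReflTransGen SwapStep a (update a i (p * a i)) := by
  induction p using swap_induction_on with
  | one => simpa using Relation.ReflTransGen.refl
  | swap_mul f u v huv ih =>
    refine ih.tail ⟨i, swap u v, ⟨u, v, huv, rfl⟩, ?_⟩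
    rw [update_self, update_idem, mul_assoc]

theorem reflTransGen_swapStep_update (a : ∀ i, Perm (α i)) (i : ι) (q : Perm (α i)) :
    Relation.ReflTransGen SwapStep a (update a i q) := by
  simpa using reflTransGen_swapStep_update_mul a i (q * (a i)⁻¹)

theorem reflTransGen_swapStep_piecewise (x y : ∀ i, Perm (α i)) (S : Finset ι) :
    Relation.ReflTransGen SwapStep x (S.piecewise y x) := by
  induction S using Finset.induction_on with
  | empty => simpa using Relation.ReflTransGen.refl
  | insert j S _ ih =>
    rw [Finset.piecewise_insert]
    exact ih.trans (reflTransGen_swapStep_update _ j (y j))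

end Equiv.Perm

/-- Connectivity of the state space of the pseudograph chain `A`: states are families
of perfect matchings, one within each complete bipartite degree neighborhood (the
`i`-th neighborhood having `s i` mini-vertices and `s i` mini-endpoints, so its
perfect matchings are permutations of `Fin (s i)`). An endpoint swap acts on a single
neighborhood `i` by composing its matching with a transposition. Any two states are
connected by a finite sequence of endpoint swaps. -/
theorem stmt13 {ι : Type*} [Fintype ι] [DecidableEq ι] (s : ι → ℕ)
    (x y : ∀ i, Equiv.Perm (Fin (s i))) :
    Relation.ReflTransGen
      (fun a b => ∃ (i : ι) (t : Equiv.Perm (Fin (s i))),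
        t.IsSwap ∧ b = Function.update a i (t * a i)) x y := by
  have h := Equiv.Perm.reflTransGen_swapStep_piecewise x y Finset.univ
  rw [Finset.piecewise_univ] at h
  exact h
end

section
/- Let d_1 ≥ d_2 ≥ ... ≥ d_n be a graphical degree sequence realized by simple graphs G1 and G2 on the same labeled vertex set. Then G1 can be transformed into G2 by a finite sequence of 2-switches (replacing edges (a,b),(c,d) by (a,d),(c,b) when the new pairs are non-edges and distinct), with every intermediate graph simple and realizing the same degree sequence. -/
/-- A 2-switch: remove edges `(a,b)` and `(c,d)` and add `(a,d)` and `(c,b)`,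
assuming `a ≠ d`, `c ≠ b` and neither new pair is already an edge. This preserves
all vertex degrees and simplicity. -/
def twoSwitch {V : Type*} (G H : SimpleGraph V) : Prop :=
  ∃ a b c d : V, G.Adj a b ∧ G.Adj c d ∧
    a ≠ d ∧ c ≠ b ∧ ¬ G.Adj a d ∧ ¬ G.Adj c b ∧
    H = SimpleGraph.fromEdgeSet
      ((G.edgeSet \ {s(a, b), s(c, d)}) ∪ {s(a, d), s(c, b)})

/-!
Colour the edges of `G \ H` red and those of `H \ G` blue; equal degrees mean every vertex has
as many red as blue edges. Since a 2-switch can be undone, it suffices to find a 2-switch in `G`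
or in `H` that shrinks the symmetric difference of the edge sets. A 2-switch toggles four edges,
so it does so as soon as at most one of them is toggled the wrong way. Take a vertex `c` of
maximal red degree, a blue edge `cb` and a red edge `ba`. For a red neighbour `x ≠ a` of `c`: if
`ax ∉ G`, switching `ab, cx` in `G` helps, and if `ax ∈ H`, switching `bc, xa` in `H` helps.
If neither helps, every such `ax` is red, and the transposition `(a c)` maps the red
neighbourhood of `c`, together with `b`, injectively into the red neighbourhood of `a`,
contradicting the choice of `c`.
-/

open scoped symmDiff

lemma Set.ncard_symmDiff_lt {α : Type*} {s t : Set α} (hs : s.Finite) (ht : t.Finite)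
    (h : (t \ s).ncard < (t ∩ s).ncard) : (s ∆ t).ncard < s.ncard := by
  rw [Set.symmDiff_def, Set.ncard_union_eq disjoint_sdiff_sdiff hs.sdiff ht.sdiff,
    ← Set.ncard_inter_add_ncard_sdiff_eq_ncard s t hs, Set.inter_comm]
  omega

variable {V : Type*} {G H : SimpleGraph V} {a b c d v w : V}

namespace SimpleGraph

def switch (G : SimpleGraph V) (a b c d : V) : SimpleGraph V :=
  fromEdgeSet ((G.edgeSet \ {s(a, b), s(c, d)}) ∪ {s(a, d), s(c, b)})

lemma switch_swap : G.switch b a d c = G.switch a b c d := by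
  simp only [switch, Sym2.eq_swap (a := b), Sym2.eq_swap (a := d), Set.pair_comm s(c, b) s(a, d)]

lemma switch_comm : G.switch c d a b = G.switch a b c d := by
  rw [switch, switch, Set.pair_comm s(c, d) s(a, b), Set.pair_comm s(c, b) s(a, d)]

structure CanSwitch (G : SimpleGraph V) (a b c d : V) : Prop where
  adj_ab : G.Adj a b
  adj_cd : G.Adj c d
  ne_ad : a ≠ d
  ne_cb : c ≠ b
  not_adj_ad : ¬G.Adj a d
  not_adj_cb : ¬G.Adj c b

noncomputable def edgeDist (G H : SimpleGraph V) : ℕ := (G.edgeSet ∆ H.edgeSet).ncard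

lemma edgeDist_comm (G H : SimpleGraph V) : edgeDist G H = edgeDist H G := by
  rw [edgeDist, edgeDist, symmDiff_comm]

namespace CanSwitch

variable (h : G.CanSwitch a b c d)
include h

lemma ne_ac : a ≠ c := by rintro rfl; exact h.not_adj_ad h.adj_cd

lemma ne_bd : b ≠ d := by rintro rfl; exact h.not_adj_cb h.adj_cd

lemma swap : G.CanSwitch b a d c :=
  ⟨h.adj_ab.symm, h.adj_cd.symm, h.ne_cb.symm, h.ne_ad.symm,
    fun h' => h.not_adj_cb h'.symm, fun h' => h.not_adj_ad h'.symm⟩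

lemma comm : G.CanSwitch c d a b :=
  ⟨h.adj_cd, h.adj_ab, h.ne_cb, h.ne_ad, h.not_adj_cb, h.not_adj_ad⟩

lemma edgeSet_switch :
    (G.switch a b c d).edgeSet = G.edgeSet ∆ {s(a, b), s(c, d), s(a, d), s(c, b)} := by
  have hab : s(a, b) ∈ G.edgeSet := h.adj_ab
  have hcd : s(c, d) ∈ G.edgeSet := h.adj_cd
  have had : s(a, d) ∉ G.edgeSet := h.not_adj_ad
  have hcb : s(c, b) ∉ G.edgeSet := h.not_adj_cb
  have hdiag : ∀ e ∈ G.edgeSet, ¬e.IsDiag := fun e he => G.not_isDiag_of_mem_edgeSet he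
  have := h.ne_ad
  have := h.ne_cb
  ext e
  simp only [switch, edgeSet_fromEdgeSet, Set.mem_sdiff, Set.mem_union, Set.mem_insert_iff,
    Set.mem_singleton_iff, Sym2.mem_diagSet, Set.mem_symmDiff]
  grind [Sym2.mk_isDiag_iff]

lemma adj_switch : (G.switch a b c d).Adj v w ↔
    s(v, w) ∈ G.edgeSet ∆ {s(a, b), s(c, d), s(a, d), s(c, b)} := by
  rw [← mem_edgeSet, h.edgeSet_switch]

lemma neighborSet_switch_left :
    (G.switch a b c d).neighborSet a = insert d (G.neighborSet a \ {b}) := by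
  have := h.ne_ac
  have := h.ne_bd
  have := h.adj_ab
  have := h.adj_ab.ne
  have := h.not_adj_ad
  have := h.ne_ad
  ext w
  simp only [mem_neighborSet, h.adj_switch, Set.mem_symmDiff, Set.mem_insert_iff,
    Set.mem_singleton_iff, Set.mem_sdiff, mem_edgeSet, Sym2.eq_iff]
  grind

lemma neighborSet_switch_of_ne (ha : v ≠ a) (hb : v ≠ b) (hc : v ≠ c) (hd : v ≠ d) :
    (G.switch a b c d).neighborSet v = G.neighborSet v := by
  ext w
  simp only [mem_neighborSet, h.adj_switch, Set.mem_symmDiff, Set.mem_insert_iff,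
    Set.mem_singleton_iff, mem_edgeSet, Sym2.eq_iff]
  grind

lemma ncard_neighborSet_switch_left [Finite V] :
    ((G.switch a b c d).neighborSet a).ncard = (G.neighborSet a).ncard := by
  rw [h.neighborSet_switch_left]
  exact Set.ncard_exchange h.not_adj_ad h.adj_ab

lemma gdeg_switch [Finite V] (v : V) : gdeg (G.switch a b c d) v = gdeg G v := by
  unfold gdeg
  by_cases ha : v = a
  · subst ha
    exact h.ncard_neighborSet_switch_left
  by_cases hb : v = b
  · subst hb
    rw [← switch_swap]
    exact h.swap.ncard_neighborSet_switch_left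
  by_cases hc : v = c
  · subst hc
    rw [← switch_comm]
    exact h.comm.ncard_neighborSet_switch_left
  by_cases hd : v = d
  · subst hd
    rw [← switch_comm, ← switch_swap]
    exact h.comm.swap.ncard_neighborSet_switch_left
  rw [h.neighborSet_switch_of_ne ha hb hc hd]

lemma switch : (G.switch a b c d).CanSwitch a d c b where
  adj_ab := h.adj_switch.2 (by simp [Set.mem_symmDiff, h.not_adj_ad])
  adj_cd := h.adj_switch.2 (by simp [Set.mem_symmDiff, h.not_adj_cb])
  ne_ad := h.adj_ab.ne
  ne_cb := h.adj_cd.ne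
  not_adj_ad := fun h' => by simpa [Set.mem_symmDiff, h.adj_ab] using h.adj_switch.1 h'
  not_adj_cb := fun h' => by simpa [Set.mem_symmDiff, h.adj_cd] using h.adj_switch.1 h'

lemma switch_switch : (G.switch a b c d).switch a d c b = G := by
  have hF : ({s(a, d), s(c, b), s(a, b), s(c, d)} : Set (Sym2 V)) =
      {s(a, b), s(c, d), s(a, d), s(c, b)} := by
    ext
    simp only [Set.mem_insert_iff, Set.mem_singleton_iff]
    tauto
  rw [← edgeSet_inj, h.switch.edgeSet_switch, h.edgeSet_switch, hF,
    symmDiff_symmDiff_cancel_right]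

lemma ncard_switchedEdges : ({s(a, b), s(c, d), s(a, d), s(c, b)} : Set (Sym2 V)).ncard = 4 := by
  have := h.ne_ac
  have := h.ne_bd
  have := h.ne_ad
  have := h.ne_cb
  have := h.adj_ab.ne
  have := h.adj_cd.ne
  rw [Set.ncard_insert_of_notMem, Set.ncard_insert_of_notMem, Set.ncard_pair] <;>
    simp only [Set.mem_insert_iff, Set.mem_singleton_iff, Sym2.eq_iff, ne_eq] <;> grind

lemma edgeDist_switch_lt [Finite V] {e : Sym2 V}
    (he : {s(a, b), s(c, d), s(a, d), s(c, b)} \ (G.edgeSet ∆ H.edgeSet) ⊆ {e}) :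
    edgeDist (G.switch a b c d) H < edgeDist G H := by
  rw [edgeDist, edgeDist, h.edgeSet_switch, symmDiff_right_comm]
  apply Set.ncard_symmDiff_lt (Set.toFinite _) (Set.toFinite _)
  have hwrong := (Set.ncard_le_ncard he).trans (Set.ncard_singleton e).le
  have := Set.ncard_inter_add_ncard_sdiff_eq_ncard
    ({s(a, b), s(c, d), s(a, d), s(c, b)} : Set (Sym2 V)) (G.edgeSet ∆ H.edgeSet)
  rw [h.ncard_switchedEdges] at this
  omega

lemma edgeDist_switch_lt_of_not_adj [Finite V] (hab : ¬H.Adj a b) (hcd : ¬H.Adj c d)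
    (hcb : H.Adj c b) : edgeDist (G.switch a b c d) H < edgeDist G H :=
  h.edgeDist_switch_lt (e := s(a, d)) <| by
    rintro _ ⟨rfl | rfl | rfl | rfl, hS⟩ <;>
      simp_all [Set.mem_symmDiff, h.adj_ab, h.adj_cd, h.not_adj_cb]

lemma edgeDist_switch_lt_of_adj [Finite V] (hab : ¬H.Adj a b) (had : H.Adj a d)
    (hcb : H.Adj c b) : edgeDist (G.switch a b c d) H < edgeDist G H :=
  h.edgeDist_switch_lt (e := s(c, d)) <| by
    rintro _ ⟨rfl | rfl | rfl | rfl, hS⟩ <;>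
      simp_all [Set.mem_symmDiff, h.adj_ab, h.not_adj_ad, h.not_adj_cb]

end CanSwitch

end SimpleGraph

open SimpleGraph

lemma twoSwitch_iff :
    twoSwitch G H ↔ ∃ a b c d, G.CanSwitch a b c d ∧ H = G.switch a b c d :=
  ⟨fun ⟨a, b, c, d, h1, h2, h3, h4, h5, h6, h⟩ => ⟨a, b, c, d, ⟨h1, h2, h3, h4, h5, h6⟩, h⟩,
    fun ⟨a, b, c, d, ⟨h1, h2, h3, h4, h5, h6⟩, h⟩ => ⟨a, b, c, d, h1, h2, h3, h4, h5, h6, h⟩⟩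

lemma SimpleGraph.CanSwitch.twoSwitch (h : G.CanSwitch a b c d) :
    twoSwitch G (G.switch a b c d) :=
  twoSwitch_iff.2 ⟨a, b, c, d, h, rfl⟩

lemma twoSwitch.symm (h : twoSwitch G H) : twoSwitch H G := by
  obtain ⟨a, b, c, d, hs, rfl⟩ := twoSwitch_iff.1 h
  simpa only [hs.switch_switch] using hs.switch.twoSwitch

lemma twoSwitch.gdeg_eq [Finite V] (h : twoSwitch G H) (v : V) : gdeg H v = gdeg G v := by
  obtain ⟨a, b, c, d, hs, rfl⟩ := twoSwitch_iff.1 h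
  exact hs.gdeg_switch v

namespace SimpleGraph

lemma exists_sdiff_adj_of_sdiff_adj [Finite V] (hdeg : ∀ v, gdeg G v = gdeg H v)
    (hvw : (G \ H).Adj v w) : ∃ x, (H \ G).Adj v x := by
  have hbal : ((G \ H).neighborSet v).ncard = ((H \ G).neighborSet v).ncard :=
    (Set.ncard_eq_ncard_iff_ncard_sdiff_eq_ncard_sdiff).1 (hdeg v)
  have hpos : 0 < ((G \ H).neighborSet v).ncard := (Set.ncard_pos).2 ⟨w, hvw⟩
  exact (Set.ncard_pos).1 (hbal ▸ hpos)

lemma exists_sdiff_adj_of_ne [Finite V] (hdeg : ∀ v, gdeg G v = gdeg H v) (hne : G ≠ H) :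
    ∃ v w, (G \ H).Adj v w := by
  by_contra! hGH
  apply hne
  ext v w
  refine ⟨fun hG => ?_, fun hH => ?_⟩
  · by_contra hH
    exact hGH v w ⟨hG, hH⟩
  · by_contra hG
    obtain ⟨x, hx⟩ := exists_sdiff_adj_of_sdiff_adj (fun v => (hdeg v).symm) ⟨hH, hG⟩
    exact hGH v x hx

lemma ncard_neighborSet_lt_of_forall_adj [Finite V] {R : SimpleGraph V} (hab : R.Adj a b)
    (hcb : ¬R.Adj c b) (hbc : b ≠ c) (h : ∀ x, R.Adj c x → x ≠ a → R.Adj a x) :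
    (R.neighborSet c).ncard < (R.neighborSet a).ncard := by
  classical
  have hsub : insert b (Equiv.swap a c '' R.neighborSet c) ⊆ R.neighborSet a := by
    rintro _ (rfl | ⟨x, (hcx : R.Adj c x), rfl⟩)
    · exact hab
    obtain rfl | hxa := eq_or_ne x a
    · simpa using hcx.symm
    · rw [Equiv.swap_apply_of_ne_of_ne hxa hcx.ne.symm]
      exact h x hcx hxa
  have hb : b ∉ Equiv.swap a c '' R.neighborSet c := by
    rintro ⟨x, (hcx : R.Adj c x), hxb⟩
    rw [Equiv.swap_apply_eq_iff, Equiv.swap_apply_of_ne_of_ne hab.ne.symm hbc] at hxb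
    exact hcb (hxb ▸ hcx)
  have := Set.ncard_le_ncard hsub
  rwa [Set.ncard_insert_of_notMem hb, Set.ncard_image_of_injective _ (Equiv.injective _)] at this

lemma exists_twoSwitch_edgeDist_lt [Finite V] (hdeg : ∀ v, gdeg G v = gdeg H v) (hne : G ≠ H) :
    ∃ G', (twoSwitch G G' ∧ edgeDist G' H < edgeDist G H) ∨
      (twoSwitch H G' ∧ edgeDist G G' < edgeDist G H) := by
  obtain ⟨u, w, huw⟩ := exists_sdiff_adj_of_ne hdeg hne
  have : Nonempty V := ⟨u⟩
  obtain ⟨c, hc⟩ := Finite.exists_max fun v => ((G \ H).neighborSet v).ncard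
  obtain ⟨y, hcy⟩ : ((G \ H).neighborSet c).Nonempty :=
    (Set.ncard_pos).1 (((Set.ncard_pos).2 ⟨w, huw⟩).trans_le (hc u))
  obtain ⟨b, hcb⟩ := exists_sdiff_adj_of_sdiff_adj hdeg hcy
  obtain ⟨a, hba⟩ := exists_sdiff_adj_of_sdiff_adj (fun v => (hdeg v).symm) hcb.symm
  by_contra! hno
  have hred : ∀ x, (G \ H).Adj c x → x ≠ a → (G \ H).Adj a x := by
    intro x hcx hxa
    have hGax : G.Adj a x := by
      by_contra hGax
      have hs : G.CanSwitch a b c x := ⟨hba.1.symm, hcx.1, hxa.symm, hcb.1.ne, hGax, hcb.2⟩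
      exact ((hno _).1 hs.twoSwitch).not_gt
        (hs.edgeDist_switch_lt_of_not_adj (fun h => hba.2 h.symm) hcx.2 hcb.1)
    have hHax : ¬H.Adj a x := by
      intro hHax
      have hs : H.CanSwitch b c x a :=
        ⟨hcb.1.symm, hHax.symm, hba.1.ne, hcx.1.ne.symm, hba.2, fun h => hcx.2 h.symm⟩
      have := hs.edgeDist_switch_lt_of_adj (fun h => hcb.2 h.symm) hba.1 hcx.1.symm
      rw [edgeDist_comm, edgeDist_comm H] at this
      exact ((hno _).2 hs.twoSwitch).not_gt this
    exact ⟨hGax, hHax⟩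
  exact (hc a).not_gt
    (ncard_neighborSet_lt_of_forall_adj hba.symm (fun h => hcb.2 h.1) hcb.ne.symm hred)

theorem reflTransGen_twoSwitch_of_gdeg_eq [Finite V] (hdeg : ∀ v, gdeg G v = gdeg H v) :
    Relation.ReflTransGen twoSwitch G H := by
  induction hk : edgeDist G H using Nat.strong_induction_on generalizing G H with
  | _ k ih =>
  by_cases hGH : G = H
  · exact hGH ▸ .refl
  obtain ⟨G', ⟨hsw, hlt⟩ | ⟨hsw, hlt⟩⟩ := exists_twoSwitch_edgeDist_lt hdeg hGH
  · exact .head hsw (ih _ (hk ▸ hlt) (fun v => (hsw.gdeg_eq v).trans (hdeg v)) rfl)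
  · exact .tail (ih _ (hk ▸ hlt) (fun v => (hdeg v).trans (hsw.gdeg_eq v).symm) rfl) hsw.symm

end SimpleGraph

theorem stmt18_general (n : ℕ) (d : Fin n → ℕ)
    (G1 G2 : SimpleGraph (Fin n))
    (h1 : ∀ i, gdeg G1 i = d i) (h2 : ∀ i, gdeg G2 i = d i) :
    Relation.ReflTransGen twoSwitch G1 G2 :=
  reflTransGen_twoSwitch_of_gdeg_eq fun i => (h1 i).trans (h2 i).symm

/-- Taylor's theorem: if `G1` and `G2` are simple graphs on the same labeled vertex
set realizing the same non-increasing degree sequence `d_1 ≥ … ≥ d_n` (vertex `i`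
having degree `d i` in both), then `G1` can be transformed into `G2` by a finite
sequence of 2-switches, every intermediate graph being simple with the same degrees. -/
theorem stmt18 (n : ℕ) (d : Fin n → ℕ) (hsort : ∀ i j : Fin n, i ≤ j → d j ≤ d i)
    (G1 G2 : SimpleGraph (Fin n))
    (h1 : ∀ i, gdeg G1 i = d i) (h2 : ∀ i, gdeg G2 i = d i) :
    Relation.ReflTransGen twoSwitch G1 G2 :=
  stmt18_general n d G1 G2 h1 h2
end

section
/- In the greedy JDM construction, after processing any set S of degree-pairs, the residual instance remains feasible: for every unprocessed pair (k,l) with k ≠ l, the residual edge count satisfies Ĵ_{k,l} ≤ D̂_k · D̂_l, and for every unprocessed (k,k), Ĵ_{k,k} ≤ C(D̂_k, 2), where D̂_k is the number of degree-k vertices with nonzero residual degree, provided that at every step the residual degrees of any two same-degree vertices differ by at most 1 and the original J satisfied the graphicality conditions. -/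
/-!
Within a degree class the balanced invariant leaves two possibilities: either no residual
degree has dropped to `0`, so the active vertices are the whole class and the original
graphicality bound applies verbatim; or some residual is `0`, so every active vertex has
residual exactly `1` and the residual sum of the class equals its number of active
vertices. In the second case the unprocessed entry `J k l` (resp. `2 J k k`) is at most
that residual sum, which gives the bound directly.
-/

open Finset

section Balanced

variable {V : Type*} {s t : Finset V} {r : V → ℕ}

def IsBalancedOn (s : Finset V) (r : V → ℕ) : Prop :=
  ∀ u ∈ s, ∀ v ∈ s, r u ≤ r v + 1

theorem IsBalancedOn.sum_eq_card_filter_ne_zero (h : IsBalancedOn s r) {v : V} (hv : v ∈ s)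
    (hv0 : r v = 0) : ∑ u ∈ s, r u = #{u ∈ s | r u ≠ 0} := by
  rw [← sum_filter_ne_zero, card_eq_sum_ones]
  refine sum_congr rfl fun u hu => ?_
  rw [mem_filter] at hu
  have := h u hu.1 v hv
  omega

theorem IsBalancedOn.filter_ne_zero_eq_self_or_sum_eq_card (h : IsBalancedOn s r) :
    {u ∈ s | r u ≠ 0} = s ∨ ∑ u ∈ s, r u = #{u ∈ s | r u ≠ 0} := by
  by_cases hz : ∃ v ∈ s, r v = 0
  · obtain ⟨v, hv, hv0⟩ := hz
    exact .inr (h.sum_eq_card_filter_ne_zero hv hv0)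
  · push Not at hz
    exact .inl (filter_true_of_mem hz)

theorem card_filter_ne_zero_pos (h : 0 < ∑ u ∈ s, r u) : 0 < #{u ∈ s | r u ≠ 0} := by
  rw [← sum_filter_ne_zero] at h
  exact card_pos.2 (nonempty_of_sum_ne_zero h.ne')

theorem IsBalancedOn.le_card_mul_card_filter_ne_zero (hs : IsBalancedOn s r)
    (ht : IsBalancedOn t r) {j : ℕ} (hj : j ≤ #s * #t) (hjs : j ≤ ∑ u ∈ s, r u)
    (hjt : j ≤ ∑ u ∈ t, r u) : j ≤ #{u ∈ s | r u ≠ 0} * #{u ∈ t | r u ≠ 0} := by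
  rcases Nat.eq_zero_or_pos j with rfl | hj0
  · exact Nat.zero_le _
  rcases hs.filter_ne_zero_eq_self_or_sum_eq_card with hs' | hs'
  · rcases ht.filter_ne_zero_eq_self_or_sum_eq_card with ht' | ht'
    · rwa [hs', ht']
    · calc j ≤ #{u ∈ t | r u ≠ 0} := ht' ▸ hjt
        _ ≤ _ := Nat.le_mul_of_pos_left _ (card_filter_ne_zero_pos (hj0.trans_le hjs))
  · calc j ≤ #{u ∈ s | r u ≠ 0} := hs' ▸ hjs
      _ ≤ _ := Nat.le_mul_of_pos_right _ (card_filter_ne_zero_pos (hj0.trans_le hjt))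

theorem Nat.le_choose_two_of_two_mul_le {j n : ℕ} (h : 2 * j ≤ n) : j ≤ n.choose 2 := by
  rcases Nat.eq_zero_or_pos j with rfl | hj0
  · exact Nat.zero_le _
  rw [Nat.choose_two_right, Nat.le_div_iff_mul_le two_pos]
  calc j * 2 ≤ n * 1 := by omega
    _ ≤ n * (n - 1) := Nat.mul_le_mul_left _ (by omega)

theorem IsBalancedOn.le_choose_two_card_filter_ne_zero (hs : IsBalancedOn s r) {j : ℕ}
    (hj : j ≤ (#s).choose 2) (hjs : 2 * j ≤ ∑ u ∈ s, r u) :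
    j ≤ (#{u ∈ s | r u ≠ 0}).choose 2 := by
  rcases hs.filter_ne_zero_eq_self_or_sum_eq_card with hs' | hs'
  · rwa [hs']
  · exact Nat.le_choose_two_of_two_mul_le (hs' ▸ hjs)

end Balanced

theorem diag_add_entry_le_of_eq_residual {N k l x : ℕ} {J : ℕ → ℕ → ℕ} {S : Finset (Sym2 ℕ)}
    (hJ : N ≤ l → J k l = 0)
    (hx : x = (if s(k, k) ∈ S then 0 else J k k) +
      ∑ i ∈ range N, (if s(k, i) ∈ S then 0 else J k i))
    (hS : s(k, l) ∉ S) : (if k = l then J k l else 0) + J k l ≤ x := by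
  by_cases hl : l < N
  · have hle : J k l ≤ ∑ i ∈ range N, (if s(k, i) ∈ S then 0 else J k i) := by
      simpa [hS] using single_le_sum (f := fun i => if s(k, i) ∈ S then 0 else J k i)
        (fun _ _ => Nat.zero_le _) (mem_range.2 hl)
    rw [hx]
    rcases eq_or_ne k l with rfl | hkl
    · simp only [if_true, hS, if_false]
      omega
    · simp only [hkl, if_false]
      omega
  · simp [hJ (not_lt.1 hl)]

theorem stmt19_general {V : Type*} [Fintype V] [DecidableEq V] (N : ℕ) (J : ℕ → ℕ → ℕ)
    (deg0 r : V → ℕ) (S : Finset (Sym2 ℕ))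
    (hsym : ∀ k l, J k l = J l k)
    (hsupp : ∀ k l, N ≤ k → J k l = 0)
    (horig1 : ∀ k l, k ≠ l →
      J k l ≤ (Finset.univ.filter (fun v => deg0 v = k)).card *
              (Finset.univ.filter (fun v => deg0 v = l)).card)
    (horig2 : ∀ k,
      J k k ≤ ((Finset.univ.filter (fun v => deg0 v = k)).card).choose 2)
    (hbal : ∀ u v, deg0 u = deg0 v → r u ≤ r v + 1)
    (hsum : ∀ k, ∑ v ∈ Finset.univ.filter (fun v => deg0 v = k), r v =
      (if s(k, k) ∈ S then 0 else J k k) +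
        ∑ l ∈ Finset.range N, (if s(k, l) ∈ S then 0 else J k l)) :
    (∀ k l, k ≠ l → s(k, l) ∉ S →
      J k l ≤ (Finset.univ.filter (fun v => deg0 v = k ∧ r v ≠ 0)).card *
              (Finset.univ.filter (fun v => deg0 v = l ∧ r v ≠ 0)).card) ∧
    (∀ k, s(k, k) ∉ S →
      J k k ≤ ((Finset.univ.filter (fun v => deg0 v = k ∧ r v ≠ 0)).card).choose 2) := by
  set A : ℕ → Finset V := fun k => {v | deg0 v = k}
  have hactive k : ({v | deg0 v = k ∧ r v ≠ 0} : Finset V) = {v ∈ A k | r v ≠ 0} :=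
    (filter_filter _ _ _).symm
  have hbalA k : IsBalancedOn (A k) r := fun u hu v hv =>
    hbal u v ((mem_filter.1 hu).2.trans (mem_filter.1 hv).2.symm)
  have hres k l (hS : s(k, l) ∉ S) :
      (if k = l then J k l else 0) + J k l ≤ ∑ v ∈ A k, r v :=
    diag_add_entry_le_of_eq_residual (fun hl => (hsym k l).trans (hsupp l k hl)) (hsum k) hS
  refine ⟨fun k l hkl hS => ?_, fun k hS => ?_⟩
  · rw [hactive, hactive]
    refine (hbalA k).le_card_mul_card_filter_ne_zero (hbalA l) (horig1 k l hkl) ?_ ?_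
    · simpa [hkl] using hres k l hS
    · rw [hsym]
      simpa [hkl.symm] using hres l k (by rwa [Sym2.eq_swap])
  · rw [hactive]
    exact (hbalA k).le_choose_two_card_filter_ne_zero (horig2 k)
      (by simpa [two_mul] using hres k k hS)

/-- Feasibility of the residual instance in the greedy JDM construction.

`V` is the vertex set with prescribed degrees `deg0` (all `< N`), `J` is a graphical
joint degree matrix (symmetric, supported on degrees `< N`, satisfying the
graphicality conditions `horig1`, `horig2` with respect to the vertex counts), and
`S` is the set of already-processed degree-pairs. `r v` is the residual degree of
vertex `v`. The balanced degree invariant `hbal` says residual degrees of same-degree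
vertices differ by at most 1, and `hsum` says the residual degree-`k` endpoints
exactly cover the unprocessed entries `Ĵ_{k,l}` (an unprocessed diagonal entry
contributing `2·J_{k,k}`). Then the residual instance is feasible: for every
unprocessed pair `(k,l)` with `k ≠ l`, `Ĵ_{k,l} = J_{k,l} ≤ D̂_k · D̂_l`, and for
every unprocessed `(k,k)`, `J_{k,k} ≤ C(D̂_k, 2)`, where `D̂_k` counts degree-`k`
vertices with nonzero residual degree. -/
theorem stmt19 {V : Type*} [Fintype V] [DecidableEq V] (N : ℕ) (J : ℕ → ℕ → ℕ)
    (deg0 r : V → ℕ) (S : Finset (Sym2 ℕ))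
    (hsym : ∀ k l, J k l = J l k)
    (hsupp : ∀ k l, N ≤ k → J k l = 0)
    (hdeg : ∀ v, deg0 v < N)
    (hr : ∀ v, r v ≤ deg0 v)
    (horig1 : ∀ k l, k ≠ l →
      J k l ≤ (Finset.univ.filter (fun v => deg0 v = k)).card *
              (Finset.univ.filter (fun v => deg0 v = l)).card)
    (horig2 : ∀ k,
      J k k ≤ ((Finset.univ.filter (fun v => deg0 v = k)).card).choose 2)
    (hbal : ∀ u v, deg0 u = deg0 v → r u ≤ r v + 1)
    (hsum : ∀ k, ∑ v ∈ Finset.univ.filter (fun v => deg0 v = k), r v =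
      (if s(k, k) ∈ S then 0 else J k k) +
        ∑ l ∈ Finset.range N, (if s(k, l) ∈ S then 0 else J k l)) :
    (∀ k l, k ≠ l → s(k, l) ∉ S →
      J k l ≤ (Finset.univ.filter (fun v => deg0 v = k ∧ r v ≠ 0)).card *
              (Finset.univ.filter (fun v => deg0 v = l ∧ r v ≠ 0)).card) ∧
    (∀ k, s(k, k) ∉ S →
      J k k ≤ ((Finset.univ.filter (fun v => deg0 v = k ∧ r v ≠ 0)).card).choose 2) :=
  stmt19_general N J deg0 r S hsym hsupp horig1 horig2 hbal hsum
end
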